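/- Let u₁, u₂ : ℝⁿ → ℝⁿ be continuously differentiable vector fields and L : ℝⁿ → ℝ continuously differentiable. Let Φ₁, Φ₂, Φ̄ be flows of u₁, u₂ and of the averaged field (u₁+u₂)/2 respectively. Then for each fixed x, as ε → 0⁺, the effects of the two opposite orderings cancel to second order: L(Φ₂(ε, Φ₁(ε, x))) + L(Φ₁(ε, Φ₂(ε, x))) − 2·L(Φ̄(2ε, x)) = o(ε²). -/

import Mathlib

/-!
All three endpoints agree with `x + ε • (u₁ x + u₂ x)` to first order. Their second-order
coefficients come from the Taylor expansion of a flow in time, which for the compositions is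
needed uniformly in the starting point near `x`; the cross terms `Du₂ u₁` and `Du₁ u₂` occur once
in each ordering, so the two orderings average to the coefficient of `Φ̄(2ε, x)`. As the three
points differ by `O(ε²)`, strict differentiability of `L` at `x` turns
`L a + L b - 2 L c` into `DL(x) (a + b - 2 c) + o(ε²) = o(ε²)`.
-/

open Asymptotics Filter Set Topology

section

variable {E F : Type*} [NormedAddCommGroup E] [NormedSpace ℝ E]
  [NormedAddCommGroup F] [NormedSpace ℝ F]

theorem eventually_forall_Icc_of_eventually_nhdsGE_prod {β : Type*} {G : Filter β}
    {P : ℝ × β → Prop} (h : ∀ᶠ p in 𝓝[≥] (0 : ℝ) ×ˢ G, P p) :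
    ∀ᶠ p in 𝓝[≥] (0 : ℝ) ×ˢ G, ∀ s ∈ Icc 0 p.1, P (s, p.2) := by
  obtain ⟨Pt, hPt, Py, hPy, hP⟩ := eventually_prod_iff.1 h
  obtain ⟨δ, hδ, hδPt⟩ := mem_nhdsGE_iff_exists_Ico_subset.1 hPt
  exact eventually_prod_iff.2 ⟨(· ∈ Ico 0 δ), Ico_mem_nhdsGE hδ, Py, hPy,
    fun {t} ht {y} hy s hs => hP (hδPt ⟨hs.1, hs.2.trans_lt ht.2⟩) hy⟩

theorem isLittleO_pow_succ_of_hasDerivAt {β : Type*} {G : Filter β} {γ γ' : ℝ → β → E} {k : ℕ}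
    (h0 : ∀ y, γ 0 y = 0)
    (hγ : ∀ᶠ p in 𝓝[≥] (0 : ℝ) ×ˢ G, HasDerivAt (γ · p.2) (γ' p.1 p.2) p.1)
    (hγ' : (fun p : ℝ × β => γ' p.1 p.2) =o[𝓝[≥] 0 ×ˢ G] fun p => p.1 ^ k) :
    (fun p : ℝ × β => γ p.1 p.2) =o[𝓝[≥] 0 ×ˢ G] fun p => p.1 ^ (k + 1) := by
  refine isLittleO_iff.2 fun c hc => ?_
  filter_upwards [tendsto_fst.eventually eventually_mem_nhdsWithin,
    eventually_forall_Icc_of_eventually_nhdsGE_prod (hγ.and (isLittleO_iff.1 hγ' hc))]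
    with ⟨t, y⟩ ht h
  dsimp only at ht h ⊢
  have hmvt := norm_image_sub_le_of_norm_deriv_le_segment' (C := c * t ^ k)
    (fun s hs => (h s hs).1.hasDerivWithinAt) (fun s hs => ?_) t (right_mem_Icc.2 ht)
  · rw [h0, sub_zero] at hmvt
    rw [Real.norm_of_nonneg (pow_nonneg ht _)]
    rwa [sub_zero, mul_assoc, ← pow_succ] at hmvt
  · have hs' : ‖s ^ k‖ ≤ t ^ k := by
      rw [Real.norm_of_nonneg (pow_nonneg hs.1 _)]
      exact pow_le_pow_left₀ hs.1 hs.2.le k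
    exact (h s (Ico_subset_Icc_self hs)).2.trans (mul_le_mul_of_nonneg_left hs' hc.le)

theorem norm_sub_le_mul_of_bootstrap {ψ w : ℝ → E} {T M K : ℝ} (hMK : M < K)
    (hψ : ∀ s ∈ Icc 0 T, HasDerivAt ψ (w s) s)
    (hw : ∀ s ∈ Ico 0 T, ‖ψ s - ψ 0‖ ≤ K * s → ‖w s‖ ≤ M) :
    ∀ s ∈ Icc 0 T, ‖ψ s - ψ 0‖ ≤ K * s := by
  refine image_norm_le_of_norm_deriv_right_lt_deriv_boundary' (f' := w) (B' := fun _ => K)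
    (fun s hs => ((hψ s hs).sub_const _).continuousAt.continuousWithinAt)
    (fun s hs => ((hψ s (Ico_subset_Icc_self hs)).sub_const _).hasDerivWithinAt)
    (by simp) (continuousOn_const.mul continuousOn_id)
    (fun s _ => ((hasDerivAt_id s).const_mul K).hasDerivWithinAt.congr_deriv (mul_one K))
    fun s hs heq => (hw s hs heq.le).trans_lt hMK

def IsLocalFlow (v : E → E) (Φ : ℝ → E → E) : Prop :=
  (∀ x, Φ 0 x = x) ∧
    ∃ r > (0 : ℝ), ∀ x, ∀ t : ℝ, |t| < r → HasDerivAt (fun s => Φ s x) (v (Φ t x)) t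

namespace IsLocalFlow

variable {v : E → E} {Φ : ℝ → E → E} {x : E}

theorem eventually_hasDerivAt_nhdsGE_prod (hΦ : IsLocalFlow v Φ) {β : Type*} (G : Filter β) :
    ∀ᶠ p in 𝓝[≥] (0 : ℝ) ×ˢ G, ∀ y, HasDerivAt (Φ · y) (v (Φ p.1 y)) p.1 := by
  obtain ⟨r, hr, hΦr⟩ := hΦ.2
  refine Eventually.prod_inl (p := fun t => ∀ y, HasDerivAt (Φ · y) (v (Φ t y)) t) ?_ G
  filter_upwards [nhdsWithin_le_nhds (Metric.ball_mem_nhds (0 : ℝ) hr)] with t ht y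
  exact hΦr y t (by simpa using ht)

/-- Trajectories starting near `x` stay, for a uniform time, where `v` is bounded. -/
theorem isBigO_sub (hΦ : IsLocalFlow v Φ) (hv : ContinuousAt v x) :
    (fun p : ℝ × E => Φ p.1 p.2 - p.2) =O[𝓝[≥] 0 ×ˢ 𝓝 x] Prod.fst := by
  obtain ⟨ρ, hρ, hvρ⟩ := Metric.continuousAt_iff.1 hv 1 one_pos
  set K := ‖v x‖ + 2 with hK_def
  have hK : 0 < K := by positivity
  obtain ⟨r, hr, hΦr⟩ := hΦ.2
  have hT : 0 < min r (ρ / (2 * K)) := lt_min hr (by positivity)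
  refine isBigO_iff.2 ⟨K, ?_⟩
  filter_upwards [prod_mem_prod (Ico_mem_nhdsGE hT) (Metric.ball_mem_nhds x (half_pos hρ))]
    with ⟨t, y⟩ ⟨ht, hy⟩
  have htr : t < r := ht.2.trans_le (min_le_left _ _)
  have htρ : K * t < ρ / 2 := by
    have := ht.2.trans_le (min_le_right _ _)
    rw [lt_div_iff₀ (by positivity)] at this
    linarith
  dsimp only at ht hy ⊢
  have hbound := norm_sub_le_mul_of_bootstrap (ψ := (Φ · y)) (T := t) (K := K)
    (show ‖v x‖ + 1 < K by rw [hK_def]; linarith) (fun s hs => hΦr y s ?_) (fun s hs hs' => ?_)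
    t (right_mem_Icc.2 ht.1)
  · rw [hΦ.1] at hbound
    rwa [Real.norm_of_nonneg ht.1]
  · rw [abs_of_nonneg hs.1]; linarith [hs.2]
  · rw [hΦ.1] at hs'
    have hdist : dist (Φ s y) x < ρ := calc
      dist (Φ s y) x ≤ ‖Φ s y - y‖ + dist y x := by
        rw [← dist_eq_norm]; exact dist_triangle _ _ _
      _ < ρ := by
        have : K * s ≤ K * t := mul_le_mul_of_nonneg_left hs.2.le hK.le
        have := Metric.mem_ball.1 hy
        linarith
    have := hvρ hdist
    rw [dist_eq_norm] at this
    linarith [norm_le_norm_add_norm_sub' (v (Φ s y)) (v x)]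

theorem tendsto_nhdsGE_prod (hΦ : IsLocalFlow v Φ) (hv : ContinuousAt v x) :
    Tendsto (fun p : ℝ × E => Φ p.1 p.2) (𝓝[≥] 0 ×ˢ 𝓝 x) (𝓝 x) := by
  have := ((hΦ.isBigO_sub hv).trans_tendsto
    (tendsto_fst.mono_right nhdsWithin_le_nhds)).add tendsto_snd
  simpa using this

theorem isLittleO_sub_sub_smul (hΦ : IsLocalFlow v Φ) (hv : ContinuousAt v x) :
    (fun p : ℝ × E => Φ p.1 p.2 - p.2 - p.1 • v x) =o[𝓝[≥] 0 ×ˢ 𝓝 x] Prod.fst := by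
  have hderiv : (fun p : ℝ × E => v (Φ p.1 p.2) - v x) =o[𝓝[≥] 0 ×ˢ 𝓝 x] fun p => p.1 ^ 0 := by
    simp only [pow_zero]
    exact (isLittleO_one_iff ℝ).2
      (tendsto_sub_nhds_zero_iff.2 (hv.tendsto.comp (hΦ.tendsto_nhdsGE_prod hv)))
  have := isLittleO_pow_succ_of_hasDerivAt (γ := fun s y => Φ s y - y - s • v x)
    (γ' := fun s y => v (Φ s y) - v x)
    (fun y => by simp [hΦ.1]) ?_ hderiv
  · simpa using this
  · filter_upwards [hΦ.eventually_hasDerivAt_nhdsGE_prod (𝓝 x)] with p hp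
    exact ((hp p.2).sub_const _).sub ((hasDerivAt_id _).smul_const _) |>.congr_deriv (by simp)

theorem isLittleO_taylor (hΦ : IsLocalFlow v Φ) {A : E →L[ℝ] E} (hv : HasStrictFDerivAt v A x) :
    (fun p : ℝ × E => Φ p.1 p.2 - p.2 - p.1 • v p.2 - (p.1 ^ 2 / 2) • A (v x))
      =o[𝓝[≥] 0 ×ˢ 𝓝 x] fun p => p.1 ^ 2 := by
  have hΦx := (hΦ.tendsto_nhdsGE_prod hv.continuousAt).prodMk_nhds tendsto_snd
  -- `v ∘ Φ - v` is linearised by strict differentiability at `x`, jointly in both arguments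
  have hlin := (hv.isLittleO.comp_tendsto hΦx).trans_isBigO (hΦ.isBigO_sub hv.continuousAt)
  have hfirst := (A.isBigO_comp _ _).trans_isLittleO (hΦ.isLittleO_sub_sub_smul hv.continuousAt)
  have hderiv : (fun p : ℝ × E => v (Φ p.1 p.2) - v p.2 - p.1 • A (v x))
      =o[𝓝[≥] 0 ×ˢ 𝓝 x] fun p => p.1 ^ 1 := by
    simp only [pow_one]
    refine (hlin.add hfirst).congr_left fun p => ?_
    simp only [Function.comp_apply, map_sub, map_smul]
    abel
  have := isLittleO_pow_succ_of_hasDerivAt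
    (γ := fun s y => Φ s y - y - s • v y - (s ^ 2 / 2) • A (v x))
    (γ' := fun s y => v (Φ s y) - v y - s • A (v x)) (fun y => by simp [hΦ.1]) ?_ hderiv
  · simpa using this
  · filter_upwards [hΦ.eventually_hasDerivAt_nhdsGE_prod (𝓝 x)] with p hp
    refine (((hp p.2).sub_const _).sub ((hasDerivAt_id _).smul_const _)).sub
      (((hasDerivAt_pow 2 _).div_const 2).smul_const _) |>.congr_deriv ?_
    simp

theorem isLittleO_taylor_at {A : E →L[ℝ] E} (hΦ : IsLocalFlow v Φ)
    (hv : HasStrictFDerivAt v A x) :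
    (fun t => Φ t x - x - t • v x - (t ^ 2 / 2) • A (v x)) =o[𝓝[≥] 0] fun t => t ^ 2 :=
  (hΦ.isLittleO_taylor hv).comp_tendsto (tendsto_id.prodMk tendsto_const_nhds)

theorem isLittleO_taylor_comp {u v : E → E} {Au Av : E →L[ℝ] E} {Ψ : ℝ → E → E}
    (hΨ : IsLocalFlow u Ψ) (hΦ : IsLocalFlow v Φ)
    (hu : HasStrictFDerivAt u Au x) (hv : HasStrictFDerivAt v Av x) :
    (fun t => Φ t (Ψ t x) - x - t • (u x + v x)
        - t ^ 2 • ((2⁻¹ : ℝ) • Au (u x) + Av (u x) + (2⁻¹ : ℝ) • Av (v x)))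
      =o[𝓝[≥] 0] fun t => t ^ 2 := by
  have hΨx : Tendsto (fun t => Ψ t x) (𝓝[≥] 0) (𝓝 x) :=
    (hΨ.tendsto_nhdsGE_prod hu.continuousAt).comp (tendsto_id.prodMk tendsto_const_nhds)
  have hΨ_taylor := hΨ.isLittleO_taylor_at hu
  have hΨ_first := (hΨ.isLittleO_sub_sub_smul hu.continuousAt).comp_tendsto
    (tendsto_id.prodMk (tendsto_const_nhds (x := x)))
  have hΨ_bigO := (hΨ.isBigO_sub hu.continuousAt).comp_tendsto
    (tendsto_id.prodMk (tendsto_const_nhds (x := x)))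
  have hΦ_taylor := (hΦ.isLittleO_taylor hv).comp_tendsto (tendsto_id.prodMk hΨx)
  have hv_first : (fun t => v (Ψ t x) - v x - t • Av (u x)) =o[𝓝[≥] 0] fun t => t := by
    have hlin := (hv.hasFDerivAt.isLittleO.comp_tendsto hΨx).trans_isBigO hΨ_bigO
    refine (hlin.add ((Av.isBigO_comp _ _).trans_isLittleO hΨ_first)).congr_left fun t => ?_
    simp only [Function.comp_apply, id_eq, map_sub, map_smul]
    abel
  have hv_second := ((isBigO_refl (fun t : ℝ => t) _).smul_isLittleO hv_first).congr_right
    fun t => (sq t).symm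
  refine ((hΦ_taylor.add hΨ_taylor).add hv_second).congr_left fun t => ?_
  simp only [Function.comp_apply, id_eq]
  module

theorem isLittleO_taylor_two_mul_of_average {u w : E → E} {Au Aw : E →L[ℝ] E}
    (hΦ : IsLocalFlow (fun z => (2⁻¹ : ℝ) • (u z + w z)) Φ)
    (hu : HasStrictFDerivAt u Au x) (hw : HasStrictFDerivAt w Aw x) :
    (fun t => Φ (2 * t) x - x - t • (u x + w x)
        - t ^ 2 • ((2⁻¹ : ℝ) • (Au + Aw) (u x + w x)))
      =o[𝓝[≥] 0] fun t => t ^ 2 := by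
  have h2 : Tendsto (fun t : ℝ => 2 * t) (𝓝[≥] 0) (𝓝[≥] 0) :=
    tendsto_nhdsWithin_iff.2
      ⟨((continuous_const_mul 2).tendsto' 0 0 (mul_zero 2)).mono_left nhdsWithin_le_nhds,
        eventually_mem_nhdsWithin.mono fun t (ht : 0 ≤ t) => show 0 ≤ 2 * t by positivity⟩
  have hsq : (fun t : ℝ => (2 * t) ^ 2) =O[𝓝[≥] 0] fun t => t ^ 2 :=
    ((isBigO_refl (fun t : ℝ => t ^ 2) _).const_mul_left 4).congr_left fun t => by ring
  have htaylor := hΦ.isLittleO_taylor_at ((hu.add hw).const_smul (2⁻¹ : ℝ))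
  refine ((htaylor.comp_tendsto h2).trans_isBigO hsq).congr_left fun t => ?_
  simp only [Function.comp_apply, smul_apply, add_apply, map_smul, map_add]
  module

end IsLocalFlow

theorem HasStrictFDerivAt.isLittleO_sub_sub_of_isBigO {α : Type*} {l : Filter α} {f : E → F}
    {f' : E →L[ℝ] F} {x : E} (hf : HasStrictFDerivAt f f' x) {a c : α → E} {g : α → ℝ}
    (ha : Tendsto a l (𝓝 x)) (hc : Tendsto c l (𝓝 x)) (hac : (fun t => a t - c t) =O[l] g) :
    (fun t => f (a t) - f (c t) - f' (a t - c t)) =o[l] g :=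
  (hf.isLittleO.comp_tendsto (ha.prodMk_nhds hc)).trans_isBigO hac

theorem HasStrictFDerivAt.isLittleO_add_sub_two_smul {α : Type*} {l : Filter α} {f : E → F}
    {f' : E →L[ℝ] F} {x : E} (hf : HasStrictFDerivAt f f' x) {a b c p : α → E} {g : α → ℝ}
    {qa qb qc : E} (hp : Tendsto p l (𝓝 x)) (hg : Tendsto g l (𝓝 0))
    (ha : (fun t => a t - (p t + g t • qa)) =o[l] g)
    (hb : (fun t => b t - (p t + g t • qb)) =o[l] g)
    (hc : (fun t => c t - (p t + g t • qc)) =o[l] g) (hq : qa + qb = (2 : ℝ) • qc) :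
    (fun t => f (a t) + f (b t) - (2 : ℝ) • f (c t)) =o[l] g := by
  have tendsto_of_expansion : ∀ {a : α → E} {q : E}, (fun t => a t - (p t + g t • q)) =o[l] g →
      Tendsto a l (𝓝 x) := fun {a q} h => by
    have := ((h.trans_tendsto hg).add hp).add (hg.smul_const q)
    rw [zero_add, zero_smul, add_zero] at this
    exact this.congr fun t => by abel
  have isBigO_of_expansion : ∀ {a : α → E} {q : E}, (fun t => a t - (p t + g t • q)) =o[l] g →
      (fun t => a t - c t) =O[l] g := fun {a q} h => by
    have hsmul : (fun t => g t • (q - qc)) =O[l] g :=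
      isBigO_of_le' (c := ‖q - qc‖) l fun t => by rw [norm_smul, mul_comm]
    refine ((h.sub hc).isBigO.add hsmul).congr_left fun t => ?_
    module
  have hsum : (fun t => f' (a t + b t - (2 : ℝ) • c t)) =o[l] g := by
    refine (f'.isBigO_comp _ _).trans_isLittleO
      (((ha.add hb).sub (hc.const_smul_left (2 : ℝ))).congr_left fun t => ?_)
    rw [Pi.smul_apply]
    linear_combination (norm := module) (-g t) • hq
  have hcx := tendsto_of_expansion hc
  have hrem_a := hf.isLittleO_sub_sub_of_isBigO (tendsto_of_expansion ha) hcx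
    (isBigO_of_expansion ha)
  have hrem_b := hf.isLittleO_sub_sub_of_isBigO (tendsto_of_expansion hb) hcx
    (isBigO_of_expansion hb)
  refine ((hrem_a.add hrem_b).add hsum).congr_left fun t => ?_
  simp only [map_sub, map_add, map_smul]
  module

end

/-- The excess losses of the two opposite orderings of two training segments
cancel to second order:
`L(Φ₂(ε, Φ₁(ε, x))) + L(Φ₁(ε, Φ₂(ε, x))) − 2·L(Φ̄(2ε, x)) = o(ε²)` as `ε → 0⁺`,
where `Φ̄` is the flow of the averaged field `(u₁+u₂)/2`. -/
theorem ordering_excess_loss_cancellation {n : ℕ}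
    (u₁ u₂ : EuclideanSpace ℝ (Fin n) → EuclideanSpace ℝ (Fin n))
    (hu₁ : ContDiff ℝ 1 u₁) (hu₂ : ContDiff ℝ 1 u₂)
    (L : EuclideanSpace ℝ (Fin n) → ℝ) (hL : ContDiff ℝ 1 L)
    (Φ₁ Φ₂ Φavg : ℝ → EuclideanSpace ℝ (Fin n) → EuclideanSpace ℝ (Fin n))
    (hΦ₁0 : ∀ x, Φ₁ 0 x = x) (hΦ₂0 : ∀ x, Φ₂ 0 x = x)
    (hΦavg0 : ∀ x, Φavg 0 x = x)
    (hΦ₁ : ∃ r > (0 : ℝ), ∀ x, ∀ t : ℝ, |t| < r →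
      HasDerivAt (fun s => Φ₁ s x) (u₁ (Φ₁ t x)) t)
    (hΦ₂ : ∃ r > (0 : ℝ), ∀ x, ∀ t : ℝ, |t| < r →
      HasDerivAt (fun s => Φ₂ s x) (u₂ (Φ₂ t x)) t)
    (hΦavg : ∃ r > (0 : ℝ), ∀ x, ∀ t : ℝ, |t| < r →
      HasDerivAt (fun s => Φavg s x) ((2⁻¹ : ℝ) • (u₁ (Φavg t x) + u₂ (Φavg t x))) t)
    (x : EuclideanSpace ℝ (Fin n)) :
    (fun ε : ℝ =>
        L (Φ₂ ε (Φ₁ ε x)) + L (Φ₁ ε (Φ₂ ε x)) - 2 * L (Φavg (2 * ε) x))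
      =o[𝓝[>] 0] fun ε : ℝ => ε ^ 2 := by
  have h₁ := hu₁.contDiffAt.hasStrictFDerivAt (x := x) one_ne_zero
  have h₂ := hu₂.contDiffAt.hasStrictFDerivAt (x := x) one_ne_zero
  have f₁ : IsLocalFlow u₁ Φ₁ := ⟨hΦ₁0, hΦ₁⟩
  have f₂ : IsLocalFlow u₂ Φ₂ := ⟨hΦ₂0, hΦ₂⟩
  have favg : IsLocalFlow (fun z => (2⁻¹ : ℝ) • (u₁ z + u₂ z)) Φavg := ⟨hΦavg0, hΦavg⟩
  have hL' := hL.contDiffAt.hasStrictFDerivAt (x := x) one_ne_zero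
  have hcancel := hL'.isLittleO_add_sub_two_smul
    (p := fun t => x + t • (u₁ x + u₂ x)) (g := fun t => t ^ 2)
    (((continuous_const.add (continuous_id.smul continuous_const)).tendsto' 0 x
      (by simp)).mono_left nhdsWithin_le_nhds)
    (((continuous_pow 2).tendsto' 0 0 (by simp)).mono_left nhdsWithin_le_nhds)
    (by simpa only [sub_sub] using f₁.isLittleO_taylor_comp f₂ h₁ h₂)
    (by simpa only [sub_sub, add_comm (u₂ x)] using f₂.isLittleO_taylor_comp f₁ h₂ h₁)
    (by simpa only [sub_sub] using favg.isLittleO_taylor_two_mul_of_average h₁ h₂)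
    (by simp only [add_apply, map_add]; module)
  exact (hcancel.mono (nhdsWithin_mono _ Ioi_subset_Ici_self)).congr_left fun t => by
    rw [smul_eq_mul]
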